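/- arXiv:2010.06828 — 3 statements merged into one kernel-verified Lean document; each statement's English description precedes it below -/
import Mathlib

section
/- Let Λ ⊆ ℝⁿ be a bounded measurable set, V ∈ L¹(Λ,ℝ), and (J_d)_{d∈ℕ} a sequence in L¹(Λ,ℝ) such that J_d(x) ≤ V(x) for all x ∈ Λ and all d, and ‖V − J_d‖_{L¹(Λ)} → 0 as d → ∞. Then for every γ ∈ ℝ, the measure of the symmetric difference of the sublevel sets {x ∈ Λ : V(x) ≤ γ} and {x ∈ Λ : J_d(x) ≤ γ} converges to 0 as d → ∞. -/
/-!
Since `J_d ≤ V`, the symmetric difference is `{J_d ≤ γ < V}`. Fix `δ > 0`: a point of it lies either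
in the band `{γ < V ≤ γ + δ}`, whose measure tends to `0` with `δ` by continuity of the measure
from above, or satisfies `V - J_d ≥ δ`, a set whose measure tends to `0` in `d` by Markov's
inequality, i.e. because `L¹` convergence implies convergence in measure.
-/

open MeasureTheory Set Filter
open scoped ENNReal Topology

section Sublevel

variable {α : Type*} {f g : α → ℝ} {γ : ℝ}

theorem sublevel_diff_subset_band_union (δ : ℝ) :
    {x | g x ≤ γ} \ {x | f x ≤ γ} ⊆
      f ⁻¹' Ioc γ (γ + δ) ∪ {x | ENNReal.ofReal δ ≤ edist (g x) (f x)} := by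
  rintro x ⟨hg, hf⟩
  simp only [mem_ofPred_eq, not_le] at hg hf
  by_cases hband : f x ≤ γ + δ
  · exact Or.inl ⟨hf, hband⟩
  · right
    rw [mem_ofPred_eq, edist_dist, Real.dist_eq, abs_sub_comm]
    exact ENNReal.ofReal_le_ofReal (by rw [abs_of_pos (by linarith)]; linarith)

theorem sublevel_symmDiff_eq_of_le {s : Set α} (hle : ∀ x ∈ s, g x ≤ f x) :
    ({x ∈ s | f x ≤ γ} \ {x ∈ s | g x ≤ γ}) ∪ ({x ∈ s | g x ≤ γ} \ {x ∈ s | f x ≤ γ}) =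
      ({x | g x ≤ γ} \ {x | f x ≤ γ}) ∩ s := by
  ext x
  simp only [mem_union, Set.mem_sdiff, mem_inter_iff, mem_ofPred_eq]
  constructor
  · rintro (⟨⟨hs, hf⟩, hg⟩ | ⟨⟨hs, hg⟩, hf⟩)
    · exact absurd ⟨hs, (hle x hs).trans hf⟩ hg
    · exact ⟨⟨hg, fun h => hf ⟨hs, h⟩⟩, hs⟩
  · rintro ⟨⟨hg, hf⟩, hs⟩
    exact Or.inr ⟨⟨hs, hg⟩, fun h => hf h.2⟩

end Sublevel

namespace MeasureTheory

variable {α ι : Type*} [MeasurableSpace α] {μ : Measure α} {f : α → ℝ} {g : ι → α → ℝ}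
  {l : Filter ι}

theorem tendsto_measure_preimage_Ioc_nhdsGT [IsFiniteMeasure μ] (hf : AEMeasurable f μ) (γ : ℝ) :
    Tendsto (fun r => μ (f ⁻¹' Ioc γ r)) (𝓝[>] γ) (𝓝 0) := by
  have hempty : ⋂ r > γ, f ⁻¹' Ioc γ r = ∅ := by
    refine eq_empty_of_forall_notMem fun x hx => ?_
    have hγ : γ < f x := (mem_iInter₂.1 hx (γ + 1) (by linarith)).1
    obtain ⟨r, hγr, hrx⟩ := exists_between hγ
    exact (mem_iInter₂.1 hx r hγr).2.not_gt hrx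
  have := tendsto_measure_biInter_gt (μ := μ) (s := fun r => f ⁻¹' Ioc γ r) (a := γ)
    (fun r _ => hf.nullMeasurableSet_preimage measurableSet_Ioc)
    (fun i j _ hij => preimage_mono (Ioc_subset_Ioc_right hij))
    ⟨γ + 1, by linarith, measure_ne_top μ _⟩
  rwa [hempty, measure_empty] at this

theorem TendstoInMeasure.tendsto_measure_sublevel_diff [IsFiniteMeasure μ]
    (hgf : TendstoInMeasure μ g l f) (hf : AEMeasurable f μ) (γ : ℝ) :
    Tendsto (fun i => μ ({x | g i x ≤ γ} \ {x | f x ≤ γ})) l (𝓝 0) := by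
  refine ENNReal.tendsto_nhds_zero.2 fun ε hε => ?_
  have hε2 : 0 < ε / 2 := ENNReal.half_pos hε.ne'
  obtain ⟨r, hband, hγr⟩ := ((tendsto_measure_preimage_Ioc_nhdsGT hf γ).eventually
    (eventually_le_nhds hε2) |>.and self_mem_nhdsWithin).exists
  filter_upwards [(hgf _ (ENNReal.ofReal_pos.2 (sub_pos.2 hγr))).eventually
    (eventually_le_nhds hε2)] with i hfar
  calc μ _ ≤ μ (f ⁻¹' Ioc γ (γ + (r - γ)))
          + μ {x | ENNReal.ofReal (r - γ) ≤ edist (g i x) (f x)} :=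
        (measure_mono (sublevel_diff_subset_band_union _)).trans (measure_union_le _ _)
    _ ≤ ε / 2 + ε / 2 := add_le_add (by rwa [add_sub_cancel]) hfar
    _ = ε := ENNReal.add_halves ε

theorem tendstoInMeasure_of_tendsto_integral_abs_sub (hf : Integrable f μ)
    (hg : ∀ i, Integrable (g i) μ) (hfg : Tendsto (fun i => ∫ x, |f x - g i x| ∂μ) l (𝓝 0)) :
    TendstoInMeasure μ g l f := by
  refine tendstoInMeasure_of_tendsto_eLpNorm one_ne_zero (fun i => (hg i).aestronglyMeasurable)
    hf.aestronglyMeasurable ?_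
  have heq : ∀ i, eLpNorm (g i - f) 1 μ = ENNReal.ofReal (∫ x, |f x - g i x| ∂μ) := fun i => by
    rw [eLpNorm_one_eq_lintegral_enorm, ← ofReal_integral_norm_eq_lintegral_enorm ((hg i).sub hf)]
    simp [Real.norm_eq_abs, abs_sub_comm]
  simpa [heq] using ENNReal.tendsto_ofReal hfg

end MeasureTheory

theorem sublevel_sets_converge_of_L1_convergence_general (n : ℕ)
    (Λ : Set (Fin n → ℝ))
    (hΛbdd : Bornology.IsBounded Λ)
    (V : (Fin n → ℝ) → ℝ) (J : ℕ → (Fin n → ℝ) → ℝ)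
    (hVint : IntegrableOn V Λ) (hJint : ∀ d, IntegrableOn (J d) Λ)
    (hle : ∀ d, ∀ x ∈ Λ, J d x ≤ V x)
    (hconv : Tendsto (fun d => ∫ x in Λ, |V x - J d x|) atTop (𝓝 0)) :
    ∀ γ : ℝ,
      Tendsto
        (fun d =>
          volume (({x ∈ Λ | V x ≤ γ} \ {x ∈ Λ | J d x ≤ γ}) ∪
                  ({x ∈ Λ | J d x ≤ γ} \ {x ∈ Λ | V x ≤ γ})))
        atTop (𝓝 0) := by
  intro γ
  have : IsFiniteMeasure (volume.restrict Λ) :=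
    isFiniteMeasure_restrict.2 hΛbdd.measure_lt_top.ne
  have hdiff := (tendstoInMeasure_of_tendsto_integral_abs_sub hVint hJint hconv
    ).tendsto_measure_sublevel_diff hVint.aemeasurable γ
  refine tendsto_of_tendsto_of_tendsto_of_le_of_le tendsto_const_nhds hdiff
    (fun _ => zero_le) fun d => ?_
  rw [sublevel_symmDiff_eq_of_le (hle d)]
  exact Measure.le_restrict_apply _ _

/-- If `J_d ≤ V` on a bounded measurable set `Λ` and `‖V - J_d‖_{L¹(Λ)} → 0`,
then for every `γ` the measure of the symmetric difference of the sublevel sets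
`{x ∈ Λ : V x ≤ γ}` and `{x ∈ Λ : J_d x ≤ γ}` tends to `0`. -/
theorem sublevel_sets_converge_of_L1_convergence (n : ℕ)
    (Λ : Set (Fin n → ℝ)) (hΛmeas : MeasurableSet Λ)
    (hΛbdd : Bornology.IsBounded Λ)
    (V : (Fin n → ℝ) → ℝ) (J : ℕ → (Fin n → ℝ) → ℝ)
    (hVmeas : Measurable V) (hJmeas : ∀ d, Measurable (J d))
    (hVint : IntegrableOn V Λ) (hJint : ∀ d, IntegrableOn (J d) Λ)
    (hle : ∀ d, ∀ x ∈ Λ, J d x ≤ V x)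
    (hconv : Tendsto (fun d => ∫ x in Λ, |V x - J d x|) atTop (𝓝 0)) :
    ∀ γ : ℝ,
      Tendsto
        (fun d =>
          volume (({x ∈ Λ | V x ≤ γ} \ {x ∈ Λ | J d x ≤ γ}) ∪
                  ({x ∈ Λ | J d x ≤ γ} \ {x ∈ Λ | V x ≤ γ})))
        atTop (𝓝 0) :=
  sublevel_sets_converge_of_L1_convergence_general n Λ hΛbdd V J hVint hJint hle hconv
end

section
/- Let the sequence (P_d)_{d∈ℕ} of polynomial sub-solutions satisfy: each P_d is dissipative (hence P_d ≤ V pointwise on Ω × [0,T]), and for every ε > 0 there exists a dissipative polynomial V_l with sup_{Λ×[0,T]} |V − V_l| < ε that is feasible for the degree-d problem for all sufficiently large d, while P_d maximizes ∫_{Λ×[0,T]} w·P over feasible polynomials of degree d. Then for any positive weight w ∈ L¹(Λ × [0,T], ℝ⁺), lim_{d→∞} ∫_{Λ×[0,T]} w(x,t)|V(x,t) − P_d(x,t)| dx dt = 0. -/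
open Set MeasureTheory Filter
open scoped Topology

/-- Convergence of the SOS sub-value approximations in the weighted `L¹` norm:
if each `P_d` is a sub-value function on `Λ × [0,T]` maximizing `∫ w·P` among
feasible polynomials of its degree, and for every `ε > 0` there is a feasible
(dissipative, hence sub-value) `V_l` uniformly `ε`-close to `V` which is
feasible at every sufficiently large degree, then
`∫_{Λ×[0,T]} w |V − P_d| → 0`. -/
theorem weighted_L1_convergence_of_subvalue_approximations (n : ℕ)
    (Λ : Set (Fin n → ℝ)) (hΛmeas : MeasurableSet Λ)
    (hΛbdd : Bornology.IsBounded Λ) (T : ℝ) (hT : 0 < T)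
    (w : (Fin n → ℝ) × ℝ → ℝ)
    (hw0 : ∀ p ∈ Λ ×ˢ Icc (0:ℝ) T, 0 ≤ w p)
    (hwint : IntegrableOn w (Λ ×ˢ Icc (0:ℝ) T))
    (V : (Fin n → ℝ) × ℝ → ℝ) (P : ℕ → (Fin n → ℝ) × ℝ → ℝ)
    (hVint : IntegrableOn (fun p => w p * V p) (Λ ×ˢ Icc (0:ℝ) T))
    (hPint : ∀ d, IntegrableOn (fun p => w p * P d p) (Λ ×ˢ Icc (0:ℝ) T))
    -- each `P_d` is a sub-value function:
    (hPle : ∀ d, ∀ p ∈ Λ ×ˢ Icc (0:ℝ) T, P d p ≤ V p)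
    -- near-optimality: for every `ε > 0` there is a sub-value function `V_l`
    -- uniformly `ε`-close to `V`, integrable against `w`, feasible for all
    -- sufficiently large degrees `d`, at which degrees optimality of `P_d`
    -- gives `∫ w·P_d ≥ ∫ w·V_l`:
    (hopt : ∀ ε > (0:ℝ), ∃ (N : ℕ) (Vl : (Fin n → ℝ) × ℝ → ℝ),
      (∀ p ∈ Λ ×ˢ Icc (0:ℝ) T, Vl p ≤ V p ∧ |V p - Vl p| < ε) ∧
      IntegrableOn (fun p => w p * Vl p) (Λ ×ˢ Icc (0:ℝ) T) ∧
      ∀ d ≥ N,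
        (∫ p in Λ ×ˢ Icc (0:ℝ) T, w p * Vl p) ≤
          ∫ p in Λ ×ˢ Icc (0:ℝ) T, w p * P d p) :
    Tendsto (fun d => ∫ p in Λ ×ˢ Icc (0:ℝ) T, w p * |V p - P d p|)
      atTop (𝓝 0) := by
  have hSmeas : MeasurableSet (Λ ×ˢ Icc (0:ℝ) T) := hΛmeas.prod measurableSet_Icc
  have key : ∀ d, (∫ p in Λ ×ˢ Icc (0:ℝ) T, w p * |V p - P d p|)
      = (∫ p in Λ ×ˢ Icc (0:ℝ) T, w p * V p) - ∫ p in Λ ×ˢ Icc (0:ℝ) T, w p * P d p := by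
    intro d
    rw [← integral_sub hVint (hPint d)]
    refine setIntegral_congr_fun hSmeas fun p hp => ?_
    have h := hPle d p hp
    rw [abs_of_nonneg (by linarith)]
    ring
  rw [Metric.tendsto_atTop]
  intro ε hε
  set W : ℝ := ∫ p in Λ ×ˢ Icc (0:ℝ) T, w p with hWdef
  have hW0 : 0 ≤ W := setIntegral_nonneg hSmeas hw0
  have hden : (0:ℝ) < 2 * (1 + W) := by linarith
  have hε' : 0 < ε / (2 * (1 + W)) := div_pos hε hden
  obtain ⟨N, Vl, hVl, hVlint, hge⟩ := hopt _ hε'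
  refine ⟨N, fun d hd => ?_⟩
  have hnonneg : 0 ≤ ∫ p in Λ ×ˢ Icc (0:ℝ) T, w p * |V p - P d p| :=
    setIntegral_nonneg hSmeas fun p hp => mul_nonneg (hw0 p hp) (abs_nonneg _)
  rw [Real.dist_eq, sub_zero, abs_of_nonneg hnonneg, key d]
  have h1 : (∫ p in Λ ×ˢ Icc (0:ℝ) T, w p * Vl p) ≤
      ∫ p in Λ ×ˢ Icc (0:ℝ) T, w p * P d p := hge d hd
  have h2 : (∫ p in Λ ×ˢ Icc (0:ℝ) T, (w p * V p - w p * Vl p)) ≤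
      ∫ p in Λ ×ˢ Icc (0:ℝ) T, (ε / (2 * (1 + W))) * w p := by
    refine setIntegral_mono_on (hVint.sub hVlint) (hwint.const_mul _) hSmeas fun p hp => ?_
    obtain ⟨hle, hlt⟩ := hVl p hp
    have hd1 : 0 ≤ V p - Vl p := by linarith
    have hd2 : V p - Vl p ≤ ε / (2 * (1 + W)) := by
      have := abs_of_nonneg hd1 ▸ hlt
      linarith [hlt, le_abs_self (V p - Vl p)]
    have hw' := hw0 p hp
    nlinarith
  rw [integral_sub hVint hVlint, integral_const_mul] at h2
  calc (∫ p in Λ ×ˢ Icc (0:ℝ) T, w p * V p) - ∫ p in Λ ×ˢ Icc (0:ℝ) T, w p * P d p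
      ≤ (∫ p in Λ ×ˢ Icc (0:ℝ) T, w p * V p) - ∫ p in Λ ×ˢ Icc (0:ℝ) T, w p * Vl p := by linarith
    _ ≤ (ε / (2 * (1 + W))) * W := h2
    _ < ε := by
        rw [div_mul_eq_mul_div, div_lt_iff₀ hden]
        nlinarith
end

section
/- Let Ω ⊆ ℝⁿ be bounded, U compact, and suppose V*, J : Ω × [0,T] → ℝ are such that V* is Lipschitz and, at every point (y,s) where V* is differentiable, inf_{u∈U} {∂_t V*(y,s) + c(y,u,s) + ∇_x V*(y,s)ᵀ f(y,u)} = 0, while J is C². Define H_F(x,t,u) := ∂_t F(x,t) + c(x,u,t) + ∇_x F(x,t)ᵀ f(x,u) and H̃_F(x,t) := inf_{u∈U} H_F(x,t,u). Then ess sup_{(y,s)∈Ω×[0,T]} H̃_J(y,s) ≤ M‖V* − J‖_{W^{1,∞}(Ω×[0,T])} and ess inf_{(y,s)∈Ω×[0,T]} H̃_J(y,s) ≥ −M‖V* − J‖_{W^{1,∞}(Ω×[0,T])}, where M := max{1, max_{1≤i≤n} sup_{(x,u)∈Ω×U} |f_i(x,u)|}. -/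
/-!
At a point `p` where `V*` is differentiable, the Hamiltonians of `V*` and `J` differ, for each
control `u`, by the linear functional `D V*(p) - D J(p)` evaluated at `(f(p.1, u), 1)`. Expanding
this vector in the standard basis bounds the difference by `max 1 Mf` times the sum of the
first-order partial derivatives of `V* - J` at `p`, uniformly in `u`. Infima over `U` of two
functions that are uniformly `B`-close are `B`-close, and the infimum for `V*` is `0` by the
HJB equation. Since `Ω` need not be measurable, passing from "a.e. on `Ω × [0,T]`" to points of
`Ω × [0,T]` uses that the infimum for `J` is continuous in `p`, by compactness of `U`.
-/

open Set MeasureTheory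

theorem ContinuousLinearMap.apply_prod_eq_sum {ι : Type*} [Fintype ι] [DecidableEq ι]
    (Φ : (ι → ℝ) × ℝ →L[ℝ] ℝ) (v : ι → ℝ) (t : ℝ) :
    Φ (v, t) = t * Φ (0, 1) + ∑ i, v i * Φ (Pi.single i 1, 0) := by
  have hv : (v, t) =
      t • ((0 : ι → ℝ), (1 : ℝ)) + ∑ i, v i • ((Pi.single i 1 : ι → ℝ), (0 : ℝ)) := by
    ext <;> simp [Prod.fst_sum, Prod.snd_sum, Finset.sum_apply, Pi.single_apply]
  rw [hv, map_add, map_sum]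
  simp only [map_smul, smul_eq_mul]

theorem ContinuousLinearMap.abs_apply_prod_one_le {ι : Type*} [Fintype ι] [DecidableEq ι]
    (Φ : (ι → ℝ) × ℝ →L[ℝ] ℝ) {v : ι → ℝ} {M : ℝ} (hv : ∀ i, |v i| ≤ M) :
    |Φ (v, 1)| ≤ max 1 M * (|Φ (0, 1)| + ∑ i, |Φ (Pi.single i 1, 0)|) := by
  calc |Φ (v, 1)| ≤ |Φ (0, 1)| + ∑ i, |v i| * |Φ (Pi.single i 1, 0)| := by
        rw [Φ.apply_prod_eq_sum, one_mul]
        refine (abs_add_le _ _).trans (add_le_add_right ?_ _)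
        simpa only [abs_mul] using
          Finset.abs_sum_le_sum_abs (fun i => v i * Φ (Pi.single i 1, 0)) Finset.univ
    _ ≤ max 1 M * |Φ (0, 1)| + ∑ i, max 1 M * |Φ (Pi.single i 1, 0)| := by
        gcongr with i
        · exact le_mul_of_one_le_left (abs_nonneg _) (le_max_left _ _)
        · exact (hv i).trans (le_max_right _ _)
    _ = max 1 M * (|Φ (0, 1)| + ∑ i, |Φ (Pi.single i 1, 0)|) := by
        rw [mul_add, Finset.mul_sum]

theorem abs_sInf_image_sub_le {β : Type*} {g h : β → ℝ} {U : Set β} (hU : U.Nonempty)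
    {a B : ℝ} (hh : IsGLB (h '' U) a) (hgh : ∀ u ∈ U, |g u - h u| ≤ B) :
    |sInf (g '' U) - a| ≤ B := by
  have hlower : a - B ∈ lowerBounds (g '' U) := by
    rintro _ ⟨u, hu, rfl⟩
    linarith [hh.1 (mem_image_of_mem h hu), (abs_le.1 (hgh u hu)).1]
  have hupper : sInf (g '' U) - B ∈ lowerBounds (h '' U) := by
    rintro _ ⟨u, hu, rfl⟩
    linarith [csInf_le ⟨_, hlower⟩ (mem_image_of_mem g hu), (abs_le.1 (hgh u hu)).2]
  rw [abs_le]
  constructor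
  · linarith [le_csInf (hU.image g) hlower]
  · linarith [hh.2 hupper]

theorem ae_restrict_of_forall_mem_imp {α : Type*} [MeasurableSpace α] {μ : Measure α}
    {s : Set α} {P Q : α → Prop} (hP : MeasurableSet {x | P x})
    (hQ : ∀ᵐ x ∂μ.restrict s, Q x) (hQP : ∀ x ∈ s, Q x → P x) :
    ∀ᵐ x ∂μ.restrict s, P x := by
  rw [ae_iff] at hQ
  rw [ae_restrict_iff hP, ae_iff]
  refine measure_mono_null (fun x hx => ?_)
    (nonpos_iff_eq_zero.1 ((Measure.le_restrict_apply s _).trans hQ.le))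
  obtain ⟨hs, hnP⟩ := Classical.not_imp.1 hx
  exact ⟨fun hq => hnP (hQP x hs hq), hs⟩

section Hamiltonian

variable {E V : Type*} [NormedAddCommGroup E] [NormedSpace ℝ E]

noncomputable def hamiltonian (F : E × ℝ → ℝ) (f : E → V → E) (c : E → V → ℝ → ℝ)
    (p : E × ℝ) (u : V) : ℝ :=
  fderiv ℝ F p (f p.1 u, 1) + c p.1 u p.2

theorem continuous_hamiltonian [TopologicalSpace V] {F : E × ℝ → ℝ} {f : E → V → E}
    {c : E → V → ℝ → ℝ}
    (hF : ContDiff ℝ 1 F) (hf : Continuous fun q : E × V => f q.1 q.2)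
    (hc : Continuous fun q : E × V × ℝ => c q.1 q.2.1 q.2.2) :
    Continuous fun q : (E × ℝ) × V => hamiltonian F f c q.1 q.2 := by
  unfold hamiltonian
  fun_prop

theorem setOf_eq_hamiltonian_image (F : E × ℝ → ℝ) (f : E → V → E) (c : E → V → ℝ → ℝ)
    (p : E × ℝ) (U : Set V) :
    {r : ℝ | ∃ u ∈ U, r = fderiv ℝ F p (f p.1 u, 1) + c p.1 u p.2} =
      hamiltonian F f c p '' U := by
  ext
  simp [hamiltonian, eq_comm]

end Hamiltonian

theorem hamiltonian_bounds_by_sobolev_distance_general (n m : ℕ)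
    (Ω : Set (Fin n → ℝ))
    (U : Set (Fin m → ℝ)) (hU : IsCompact U) (hUne : U.Nonempty)
    (T : ℝ)
    (f : (Fin n → ℝ) → (Fin m → ℝ) → (Fin n → ℝ))
    (c : (Fin n → ℝ) → (Fin m → ℝ) → ℝ → ℝ)
    (hf : Continuous fun q : (Fin n → ℝ) × (Fin m → ℝ) => f q.1 q.2)
    (hc : Continuous fun q : (Fin n → ℝ) × (Fin m → ℝ) × ℝ => c q.1 q.2.1 q.2.2)
    (Mf : ℝ) (hMf : ∀ x ∈ Ω, ∀ u ∈ U, ∀ i, |f x u i| ≤ Mf)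
    (Vstar J : (Fin n → ℝ) × ℝ → ℝ)
    (hJ : ContDiff ℝ 2 J)
    -- `V*` satisfies the HJB equation wherever it is differentiable:
    (hHJB : ∀ p ∈ Ω ×ˢ Icc (0:ℝ) T, DifferentiableAt ℝ Vstar p →
      IsGLB {r : ℝ | ∃ u ∈ U,
        r = fderiv ℝ Vstar p (f p.1 u, 1) + c p.1 u p.2} 0)
    -- `W` bounds the `W^{1,∞}(Ω×[0,T])` norm of `V* − J` (sum of the ess sups
    -- of `|V*−J|` and of all its first-order partial derivatives):
    (W : ℝ)
    (hW : ∀ᵐ p ∂(volume.restrict (Ω ×ˢ Icc (0:ℝ) T)),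
      DifferentiableAt ℝ Vstar p ∧
      |Vstar p - J p| +
        |fderiv ℝ Vstar p ((0 : Fin n → ℝ), (1:ℝ)) -
          fderiv ℝ J p ((0 : Fin n → ℝ), (1:ℝ))| +
        ∑ i : Fin n,
          |fderiv ℝ Vstar p (Pi.single i 1, (0:ℝ)) -
            fderiv ℝ J p (Pi.single i 1, (0:ℝ))| ≤ W) :
    ∀ᵐ p ∂(volume.restrict (Ω ×ˢ Icc (0:ℝ) T)),
      |sInf {r : ℝ | ∃ u ∈ U,
        r = fderiv ℝ J p (f p.1 u, 1) + c p.1 u p.2}| ≤ max 1 Mf * W := by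
  simp only [setOf_eq_hamiltonian_image] at hHJB ⊢
  have hcont : Continuous fun p => |sInf (hamiltonian J f c p '' U)| :=
    (hU.continuous_sInf (continuous_hamiltonian (hJ.of_le one_le_two) hf hc)).abs
  refine ae_restrict_of_forall_mem_imp (measurableSet_le hcont.measurable measurable_const) hW ?_
  rintro p hp ⟨hdiff, hdist⟩
  have hgap : ∀ u ∈ U,
      |hamiltonian Vstar f c p u - hamiltonian J f c p u| ≤ max 1 Mf * W := by
    intro u hu
    calc _ = |(fderiv ℝ Vstar p - fderiv ℝ J p) (f p.1 u, 1)| := by simp [hamiltonian]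
      _ ≤ max 1 Mf * (|(fderiv ℝ Vstar p - fderiv ℝ J p) (0, 1)| +
            ∑ i, |(fderiv ℝ Vstar p - fderiv ℝ J p) (Pi.single i 1, 0)|) :=
          ContinuousLinearMap.abs_apply_prod_one_le _ (hMf p.1 hp.1 u hu)
      _ ≤ max 1 Mf * W := by
          gcongr
          simp only [sub_apply]
          linarith [abs_nonneg (Vstar p - J p)]
  simpa using abs_sInf_image_sub_le hUne (hHJB p hp hdiff)
    fun u hu => (abs_sub_comm _ _).trans_le (hgap u hu)

/-- Bounds on the Hamiltonian of an approximate value function: if `V*` is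
Lipschitz and satisfies the HJB equation at each of its points of
differentiability, and `J ∈ C²`, then almost everywhere on `Ω × [0,T]` the
minimized Hamiltonian `H̃_J` of `J` is bounded in absolute value by
`max{1, maxᵢ sup |fᵢ|} · ‖V* − J‖_{W^{1,∞}(Ω×[0,T])}`. -/
theorem hamiltonian_bounds_by_sobolev_distance (n m : ℕ)
    (Ω : Set (Fin n → ℝ)) (hΩbdd : Bornology.IsBounded Ω)
    (U : Set (Fin m → ℝ)) (hU : IsCompact U) (hUne : U.Nonempty)
    (T : ℝ) (hT : 0 < T)
    (f : (Fin n → ℝ) → (Fin m → ℝ) → (Fin n → ℝ))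
    (c : (Fin n → ℝ) → (Fin m → ℝ) → ℝ → ℝ)
    (hf : Continuous fun q : (Fin n → ℝ) × (Fin m → ℝ) => f q.1 q.2)
    (hc : Continuous fun q : (Fin n → ℝ) × (Fin m → ℝ) × ℝ => c q.1 q.2.1 q.2.2)
    (Mf : ℝ) (hMf : ∀ x ∈ Ω, ∀ u ∈ U, ∀ i, |f x u i| ≤ Mf)
    (Vstar J : (Fin n → ℝ) × ℝ → ℝ) (L : NNReal)
    (hVlip : LipschitzOnWith L Vstar (Ω ×ˢ Icc (0:ℝ) T))
    (hJ : ContDiff ℝ 2 J)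
    -- `V*` satisfies the HJB equation wherever it is differentiable:
    (hHJB : ∀ p ∈ Ω ×ˢ Icc (0:ℝ) T, DifferentiableAt ℝ Vstar p →
      IsGLB {r : ℝ | ∃ u ∈ U,
        r = fderiv ℝ Vstar p (f p.1 u, 1) + c p.1 u p.2} 0)
    -- `W` bounds the `W^{1,∞}(Ω×[0,T])` norm of `V* − J` (sum of the ess sups
    -- of `|V*−J|` and of all its first-order partial derivatives):
    (W : ℝ)
    (hW : ∀ᵐ p ∂(volume.restrict (Ω ×ˢ Icc (0:ℝ) T)),
      DifferentiableAt ℝ Vstar p ∧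
      |Vstar p - J p| +
        |fderiv ℝ Vstar p ((0 : Fin n → ℝ), (1:ℝ)) -
          fderiv ℝ J p ((0 : Fin n → ℝ), (1:ℝ))| +
        ∑ i : Fin n,
          |fderiv ℝ Vstar p (Pi.single i 1, (0:ℝ)) -
            fderiv ℝ J p (Pi.single i 1, (0:ℝ))| ≤ W) :
    ∀ᵐ p ∂(volume.restrict (Ω ×ˢ Icc (0:ℝ) T)),
      |sInf {r : ℝ | ∃ u ∈ U,
        r = fderiv ℝ J p (f p.1 u, 1) + c p.1 u p.2}| ≤ max 1 Mf * W :=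
  hamiltonian_bounds_by_sobolev_distance_general n m Ω U hU hUne T f c hf hc Mf hMf Vstar J hJ hHJB
    W hW
end
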